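/- Let R be a reduced crystallographic root system with simple roots α₁,…,αₙ and Weyl group W, and let P = Conv(W(a)) for a ∈ C. Each vertex a of P lies on exactly the n facets Conv(W_{[n]∖{i}}(a)), i = 1,…,n, whose inward normal vectors are −ω_i∨; hence P is a simple polytope. -/

import Mathlib

open scoped InnerProductSpace

noncomputable section

structure RootSystemData (V : Type) [NormedAddCommGroup V] [InnerProductSpace ℝ V] (n : ℕ) where
  R : Set V
  α : Fin n → V
  finite : R.Finite
  root_ne_zero : ∀ β ∈ R, β ≠ (0 : V)
  reduced : ∀ β ∈ R, ∀ t : ℝ, t • β ∈ R → t = 1 ∨ t = -1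
  reflect_mem : ∀ β ∈ R, ∀ γ ∈ R, γ - (2 * ⟪γ, β⟫_ℝ / ⟪β, β⟫_ℝ) • β ∈ R
  cryst : ∀ β ∈ R, ∀ γ ∈ R, ∃ k : ℤ, 2 * ⟪γ, β⟫_ℝ / ⟪β, β⟫_ℝ = (k : ℝ)
  simple_mem : ∀ i, α i ∈ R
  indep : LinearIndependent ℝ α
  spanning : Submodule.span ℝ (Set.range α) = ⊤
  base : ∀ β ∈ R, (∃ c : Fin n → ℝ, (∀ i, 0 ≤ c i) ∧ β = ∑ i, c i • α i) ∨
      (∃ c : Fin n → ℝ, (∀ i, c i ≤ 0) ∧ β = ∑ i, c i • α i)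

namespace RootSystemData

variable {V : Type} [NormedAddCommGroup V] [InnerProductSpace ℝ V] {n : ℕ}
variable (D : RootSystemData V n)

def coroot (i : Fin n) : V := (2 / ⟪D.α i, D.α i⟫_ℝ) • D.α i

def IsSimpleReflection (i : Fin n) (g : V ≃ₗ[ℝ] V) : Prop :=
  ∀ v, g v = v - (2 * ⟪v, D.α i⟫_ℝ / ⟪D.α i, D.α i⟫_ℝ) • D.α i

def WK (K : Set (Fin n)) : Subgroup (V ≃ₗ[ℝ] V) :=
  Subgroup.closure {g | ∃ i ∈ K, D.IsSimpleReflection i g}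

def W : Subgroup (V ≃ₗ[ℝ] V) := D.WK Set.univ

def C : Set V := {x | ∀ i, 0 < ⟪x, D.α i⟫_ℝ}

def closedC : Set V := {x | ∀ i, 0 ≤ ⟪x, D.α i⟫_ℝ}

def orbit (K : Set (Fin n)) (a : V) : Set V := {x | ∃ g ∈ D.WK K, g a = x}

def F (a : V) (i : Fin n) : Set V := convexHull ℝ (D.orbit {i}ᶜ a)

def P (a : V) : Set V := convexHull ℝ (D.orbit Set.univ a)

def H (i : Fin n) : Set V := {x | ⟪x, D.α i⟫_ℝ = 0}

end RootSystemData

/-- A set `G` is a face of a convex set `A` if it is a nonempty convex extreme subset. -/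
def IsFaceOf {V : Type} [NormedAddCommGroup V] [InnerProductSpace ℝ V] (A G : Set V) : Prop :=
  Convex ℝ G ∧ IsExtreme ℝ A G ∧ G.Nonempty

/-- A facet is a maximal proper face. -/
def IsFacetOf {V : Type} [NormedAddCommGroup V] [InnerProductSpace ℝ V] (A G : Set V) : Prop :=
  IsFaceOf A G ∧ G ≠ A ∧ ∀ G' : Set V, IsFaceOf A G' → G ⊆ G' → G' = G ∨ G' = A

/-!
Write `coord i` for the coordinates in the basis of simple roots; `⟪·, ω i⟫` is `coord i`.
Every point `x` of the orbit `W a` climbs to `a` by simple reflections `s_j` with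
`⟪x, α_j⟫ < 0`, each of which adds a positive multiple of `α_j` and increases `⟪·, a⟫`. The climb
ends because the orbit is finite and, by the exchange condition, `a` is its only point in the
closed chamber. Hence `coord i ≤ coord i a` on `W a`, with equality exactly on `W_{[n]∖{i}} a`
(no `s_i` is used on the way up), so `F_i` is the face of `P` cut out by the supporting hyperplane
`coord i = coord i a`. Near `a`, `P` contains the simplex on `a, s_1 a, …, s_n a`; so a face
through `a` that lies in none of these hyperplanes contains an interior point of `P` and is `P`.
Thus the facets through `a` are exactly the `n` distinct `F_i`, and `W` carries this count to
every vertex.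
-/

section ConvexGeometry

variable {E F : Type*} [AddCommGroup E] [Module ℝ E] [AddCommGroup F] [Module ℝ F]

lemma convexHull_inter_subset_of_le {S : Set E} (f : E →ₗ[ℝ] ℝ) {c : ℝ}
    (hS : ∀ x ∈ S, f x ≤ c) :
    convexHull ℝ S ∩ {x | f x = c} ⊆ convexHull ℝ (S ∩ {x | f x = c}) := by
  classical
  rintro _ ⟨hx, hfx⟩
  rw [convexHull_eq] at hx
  obtain ⟨ι, t, w, z, hw₀, hw₁, hz, rfl⟩ := hx
  have hterm : ∀ i ∈ t, w i * (c - f (z i)) = 0 := by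
    refine (Finset.sum_eq_zero_iff_of_nonneg fun i hi =>
      mul_nonneg (hw₀ i hi) (sub_nonneg.2 (hS _ (hz i hi)))).1 ?_
    replace hfx : f (t.centerMass w z) = c := hfx
    simp only [Finset.centerMass_eq_of_sum_1 _ _ hw₁, map_sum, map_smul, smul_eq_mul] at hfx
    simp only [mul_sub, Finset.sum_sub_distrib, ← Finset.sum_mul, hw₁, hfx, one_mul, sub_self]
  rw [← Finset.centerMass_filter_ne_zero]
  refine Finset.centerMass_mem_convexHull _ (fun i hi => hw₀ i (Finset.mem_filter.1 hi).1)
    (by rw [Finset.sum_filter_ne_zero, hw₁]; exact one_pos) fun i hi => ?_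
  obtain ⟨hi, hwi⟩ := Finset.mem_filter.1 hi
  exact ⟨hz i hi, (sub_eq_zero.1 ((mul_eq_zero.1 (hterm i hi)).resolve_left hwi)).symm⟩

lemma isExtreme_inter_of_le {A : Set E} (f : E →ₗ[ℝ] ℝ) {c : ℝ} (hA : ∀ x ∈ A, f x ≤ c) :
    IsExtreme ℝ A (A ∩ {x | f x = c}) := by
  refine ⟨Set.inter_subset_left, fun x₁ h₁ x₂ h₂ x ⟨_, hx⟩ ⟨s, t, hs, ht, hst, hsum⟩ => ?_⟩
  have h₁c := hA x₁ h₁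
  have h₂c := hA x₂ h₂
  have hc : s * f x₁ + t * f x₂ = c := by
    rw [← hx.out, ← hsum, map_add, map_smul, map_smul, smul_eq_mul, smul_eq_mul]
  have h0 : s * (c - f x₁) + t * (c - f x₂) = 0 := by linear_combination c * hst - hc
  exact ⟨h₁, le_antisymm h₁c (by nlinarith [mul_nonneg ht.le (sub_nonneg.2 h₂c)])⟩

lemma Convex.add_sum_smul_sub_mem {s : Set E} (hs : Convex ℝ s) {a : E} (ha : a ∈ s) {ι : Type*}
    (t : Finset ι) {w : ι → ℝ} {y : ι → E} (hw₀ : ∀ i ∈ t, 0 ≤ w i) (hw₁ : ∑ i ∈ t, w i ≤ 1)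
    (hy : ∀ i ∈ t, y i ∈ s) : a + ∑ i ∈ t, w i • (y i - a) ∈ s := by
  rcases (Finset.sum_nonneg hw₀).eq_or_lt with h0 | hpos
  · rwa [Finset.sum_eq_zero fun i hi => by
      rw [(Finset.sum_eq_zero_iff_of_nonneg hw₀).1 h0.symm i hi, zero_smul], add_zero]
  · convert hs.add_smul_sub_mem ha (hs.centerMass_mem hw₀ hpos hy) ⟨hpos.le, hw₁⟩ using 2
    rw [Finset.centerMass, smul_sub, smul_smul, mul_inv_cancel₀ hpos.ne', one_smul,
      Finset.sum_smul]
    simp only [smul_sub, Finset.sum_sub_distrib]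

lemma IsExtreme.image (e : E ≃ₗ[ℝ] F) {A B : Set E} (h : IsExtreme ℝ A B) :
    IsExtreme ℝ (e '' A) (e '' B) := by
  refine ⟨Set.image_mono h.subset, ?_⟩
  rintro _ ⟨x₁, h₁, rfl⟩ _ ⟨x₂, h₂, rfl⟩ _ ⟨x, hx, rfl⟩ ⟨s, t, hs, ht, hst, hsum⟩
  have hseg : x ∈ openSegment ℝ x₁ x₂ := ⟨s, t, hs, ht, hst, e.injective (by simpa using hsum)⟩
  exact Set.mem_image_of_mem e (h.left_mem_of_mem_openSegment h₁ h₂ hx hseg)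

variable [TopologicalSpace E] [IsTopologicalAddGroup E] [ContinuousSMul ℝ E]

lemma IsExtreme.eq_of_mem_interior {A B : Set E} (h : IsExtreme ℝ A B) {x : E} (hxB : x ∈ B)
    (hxA : x ∈ interior A) : B = A := by
  refine h.subset.antisymm fun p hp => ?_
  have hcont : Continuous fun t : ℝ => x + t • (x - p) := by fun_prop
  obtain ⟨t, ht, htA⟩ := Filter.Eventually.exists_gt
    ((hcont.tendsto' 0 x (by simp)).eventually (isOpen_interior.mem_nhds hxA))
  refine h.left_mem_of_mem_openSegment hp (interior_subset htA) hxB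
    ⟨t / (1 + t), 1 / (1 + t), by positivity, by positivity, by field_simp; ring, ?_⟩
  match_scalars <;> field_simp
  ring

end ConvexGeometry

section Faces

variable {V : Type} [NormedAddCommGroup V] [InnerProductSpace ℝ V]

lemma IsFaceOf.image (e : V ≃ₗ[ℝ] V) {A G : Set V} (h : IsFaceOf A G) :
    IsFaceOf (e '' A) (e '' G) :=
  ⟨h.1.linear_image e.toLinearMap, h.2.1.image e, h.2.2.image e⟩

lemma IsFacetOf.image (e : V ≃ₗ[ℝ] V) {A G : Set V} (h : IsFacetOf A G) :
    IsFacetOf (e '' A) (e '' G) := by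
  obtain ⟨hface, hne, hmax⟩ := h
  refine ⟨hface.image e, (Set.image_injective.2 e.injective).ne hne, fun G' hG' hsub => ?_⟩
  have symm_image_image (S : Set V) : e.symm '' (e '' S) = S := e.toEquiv.symm_image_image S
  have image_symm_image (S : Set V) : e '' (e.symm '' S) = S := e.toEquiv.image_symm_image S
  have hback := hG'.image e.symm
  rw [symm_image_image] at hback
  have hsub' : G ⊆ e.symm '' G' := by
    rw [← symm_image_image G]
    exact Set.image_mono hsub
  rcases hmax _ hback hsub' with h | h
  · exact .inl (by rw [← h, image_symm_image])
  · exact .inr (by rw [← h, image_symm_image])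

lemma ncard_facets_mem_image (e : V ≃ₗ[ℝ] V) {A : Set V} (hA : e '' A = A) (x : V) :
    {G | IsFacetOf A G ∧ e x ∈ G}.ncard = {G | IsFacetOf A G ∧ x ∈ G}.ncard := by
  have hA' : e.symm '' A = A := by
    conv_lhs => rw [← hA]
    exact e.toEquiv.symm_image_image A
  have : {G | IsFacetOf A G ∧ e x ∈ G} = (e '' ·) '' {G | IsFacetOf A G ∧ x ∈ G} := by
    ext G
    constructor
    · rintro ⟨hG, hxG⟩
      refine ⟨e.symm '' G, ⟨hA' ▸ hG.image e.symm, e x, hxG, e.symm_apply_apply x⟩, ?_⟩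
      exact e.toEquiv.image_symm_image G
    · rintro ⟨G, ⟨hG, hxG⟩, rfl⟩
      exact ⟨hA ▸ hG.image e, Set.mem_image_of_mem e hxG⟩
  rw [this, Set.ncard_image_of_injective _ (Set.image_injective.2 e.injective)]

end Faces

namespace RootSystemData

variable {V : Type} [NormedAddCommGroup V] [InnerProductSpace ℝ V] {n : ℕ}
variable (D : RootSystemData V n)

section Reflections

lemma alpha_ne_zero (i : Fin n) : D.α i ≠ 0 := D.root_ne_zero _ (D.simple_mem i)

lemma inner_alpha_self_pos (i : Fin n) : 0 < ⟪D.α i, D.α i⟫_ℝ :=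
  real_inner_self_pos.2 (D.alpha_ne_zero i)

lemma inner_coroot (v : V) (i : Fin n) :
    ⟪v, D.coroot i⟫_ℝ = 2 * ⟪v, D.α i⟫_ℝ / ⟪D.α i, D.α i⟫_ℝ := by
  rw [coroot, real_inner_smul_right]
  ring

lemma inner_coroot_alpha_self (i : Fin n) : ⟪D.coroot i, D.α i⟫_ℝ = 2 := by
  rw [real_inner_comm, inner_coroot, mul_div_assoc, div_self (D.inner_alpha_self_pos i).ne',
    mul_one]

lemma inner_coroot_neg {x : V} {j : Fin n} (hx : ⟪x, D.α j⟫_ℝ < 0) : ⟪x, D.coroot j⟫_ℝ < 0 := by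
  rw [inner_coroot]
  exact div_neg_of_neg_of_pos (by linarith) (D.inner_alpha_self_pos j)

lemma inner_coroot_pos {x : V} {j : Fin n} (hx : 0 < ⟪x, D.α j⟫_ℝ) : 0 < ⟪x, D.coroot j⟫_ℝ := by
  rw [inner_coroot]
  exact div_pos (by linarith) (D.inner_alpha_self_pos j)

def sref (i : Fin n) : V ≃ₗ[ℝ] V :=
  Module.reflection (f := innerₛₗ ℝ (D.coroot i))
    (by rw [innerₛₗ_apply_apply]; exact D.inner_coroot_alpha_self i)

lemma sref_apply (i : Fin n) (v : V) : D.sref i v = v - ⟪v, D.coroot i⟫_ℝ • D.α i := by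
  rw [sref, Module.reflection_apply, innerₛₗ_apply_apply, real_inner_comm]

lemma sref_sref (i : Fin n) (v : V) : D.sref i (D.sref i v) = v :=
  Module.involutive_reflection _ v

lemma sref_inv (i : Fin n) : (D.sref i)⁻¹ = D.sref i := rfl

lemma sref_mul_self (i : Fin n) : D.sref i * D.sref i = 1 :=
  LinearEquiv.ext (D.sref_sref i)

lemma sref_alpha_self (i : Fin n) : D.sref i (D.α i) = -D.α i :=
  Module.reflection_apply_self _

lemma inner_sref_sref (i : Fin n) (x y : V) : ⟪D.sref i x, D.sref i y⟫_ℝ = ⟪x, y⟫_ℝ := by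
  have := (D.inner_alpha_self_pos i).ne'
  simp only [sref_apply, inner_coroot, inner_sub_left, inner_sub_right, real_inner_smul_left,
    real_inner_smul_right, real_inner_comm (D.α i)]
  field_simp
  ring

lemma sref_mem_R (i : Fin n) {β : V} (hβ : β ∈ D.R) : D.sref i β ∈ D.R := by
  rw [sref_apply, inner_coroot]
  exact D.reflect_mem _ (D.simple_mem i) _ hβ

lemma isSimpleReflection_iff (i : Fin n) (g : V ≃ₗ[ℝ] V) :
    D.IsSimpleReflection i g ↔ g = D.sref i := by
  simp only [IsSimpleReflection, LinearEquiv.ext_iff, sref_apply, inner_coroot]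

lemma WK_eq_closure (K : Set (Fin n)) : D.WK K = Subgroup.closure (D.sref '' K) := by
  simp only [WK, isSimpleReflection_iff, Set.image, eq_comm]

lemma sref_mem_WK {K : Set (Fin n)} {i : Fin n} (hi : i ∈ K) : D.sref i ∈ D.WK K := by
  rw [WK_eq_closure]
  exact Subgroup.subset_closure ⟨i, hi, rfl⟩

lemma WK_mono {K K' : Set (Fin n)} (h : K ⊆ K') : D.WK K ≤ D.WK K' := by
  simp only [WK_eq_closure]
  exact Subgroup.closure_mono (Set.image_mono h)

lemma WK_induction {K : Set (Fin n)} {p : (V ≃ₗ[ℝ] V) → Prop} (one : p 1)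
    (sref_mul : ∀ i ∈ K, ∀ g, p g → p (D.sref i * g)) {g : V ≃ₗ[ℝ] V} (hg : g ∈ D.WK K) :
    p g := by
  rw [WK_eq_closure] at hg
  induction hg using Subgroup.closure_induction_left with
  | one => exact one
  | mul_left _ hs g _ ih =>
    obtain ⟨i, hi, rfl⟩ := hs
    exact sref_mul i hi g ih
  | inv_mul_cancel _ hs g _ ih =>
    obtain ⟨i, hi, rfl⟩ := hs
    rw [sref_inv]
    exact sref_mul i hi g ih

lemma inner_map_map_of_mem_WK {K : Set (Fin n)} {g : V ≃ₗ[ℝ] V} (hg : g ∈ D.WK K) (x y : V) :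
    ⟪g x, g y⟫_ℝ = ⟪x, y⟫_ℝ :=
  D.WK_induction (p := fun g => ∀ x y, ⟪g x, g y⟫_ℝ = ⟪x, y⟫_ℝ) (fun _ _ => rfl)
    (fun i _ _ ih x y => (D.inner_sref_sref i _ _).trans (ih x y)) hg x y

lemma map_mem_R_of_mem_WK {K : Set (Fin n)} {g : V ≃ₗ[ℝ] V} (hg : g ∈ D.WK K) {β : V}
    (hβ : β ∈ D.R) : g β ∈ D.R :=
  D.WK_induction (p := fun g => g β ∈ D.R) hβ (fun i _ _ ih => D.sref_mem_R i ih) hg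

def word (l : List (Fin n)) : V ≃ₗ[ℝ] V := (l.map D.sref).prod

@[simp] lemma word_nil : D.word [] = 1 := rfl

@[simp] lemma word_cons (i : Fin n) (l : List (Fin n)) :
    D.word (i :: l) = D.sref i * D.word l := by
  simp [word]

@[simp] lemma word_append (l₁ l₂ : List (Fin n)) :
    D.word (l₁ ++ l₂) = D.word l₁ * D.word l₂ := by
  simp [word]

lemma word_mem_W (l : List (Fin n)) : D.word l ∈ D.W := by
  induction l with
  | nil => exact one_mem _
  | cons i l ih => exact mul_mem (D.sref_mem_WK (Set.mem_univ i)) ih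

lemma exists_word_eq {g : V ≃ₗ[ℝ] V} (hg : g ∈ D.W) : ∃ l, D.word l = g :=
  D.WK_induction (p := fun g => ∃ l, D.word l = g) ⟨[], rfl⟩
    (fun i _ _ ⟨l, hl⟩ => ⟨i :: l, by rw [word_cons, hl]⟩) hg

end Reflections

section Coordinates

def basis : Module.Basis (Fin n) ℝ V := .mk D.indep D.spanning.ge

lemma basis_apply (i : Fin n) : D.basis i = D.α i := Module.Basis.mk_apply _ _ _

def coord (i : Fin n) : V →ₗ[ℝ] ℝ := D.basis.coord i

lemma coord_alpha (i j : Fin n) : D.coord i (D.α j) = if j = i then 1 else 0 := by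
  rw [coord, ← basis_apply, Module.Basis.coord_apply,
    Module.Basis.repr_self, Finsupp.single_apply]

lemma sum_coord_smul_alpha (x : V) : ∑ j, D.coord j x • D.α j = x := by
  simpa [coord, basis] using D.basis.sum_repr x

lemma coord_sum_smul_alpha (c : Fin n → ℝ) (i : Fin n) : D.coord i (∑ j, c j • D.α j) = c i := by
  simp [coord_alpha]

lemma eq_zero_of_forall_coord_eq_zero {x : V} (h : ∀ j, D.coord j x = 0) : x = 0 :=
  D.basis.forall_coord_eq_zero_iff.1 h

lemma coord_sref (i j : Fin n) (x : V) :
    D.coord i (D.sref j x) = D.coord i x - if j = i then ⟪x, D.coroot j⟫_ℝ else 0 := by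
  rw [sref_apply, map_sub, map_smul, coord_alpha, smul_eq_mul, mul_ite, mul_one, mul_zero]

lemma coord_sref_of_ne {i j : Fin n} (h : j ≠ i) (x : V) :
    D.coord i (D.sref j x) = D.coord i x := by
  rw [coord_sref, if_neg h, sub_zero]

lemma coord_sref_self (i : Fin n) (x : V) :
    D.coord i (D.sref i x) = D.coord i x - ⟪x, D.coroot i⟫_ℝ := by
  rw [coord_sref, if_pos rfl]

end Coordinates

section Positivity

def IsPos (β : V) : Prop := β ∈ D.R ∧ ∀ j, 0 ≤ D.coord j β

lemma isPos_or_forall_coord_nonpos {β : V} (hβ : β ∈ D.R) :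
    D.IsPos β ∨ ∀ j, D.coord j β ≤ 0 := by
  rcases D.base β hβ with ⟨c, hc, rfl⟩ | ⟨c, hc, rfl⟩
  · exact .inl ⟨hβ, fun j => (D.coord_sum_smul_alpha c j).symm ▸ hc j⟩
  · exact .inr fun j => (D.coord_sum_smul_alpha c j).symm ▸ hc j

lemma not_isPos_neg {β : V} (hβ : D.IsPos β) : ¬ D.IsPos (-β) := fun hneg =>
  D.root_ne_zero β hβ.1 <| D.eq_zero_of_forall_coord_eq_zero fun j =>
    le_antisymm (by simpa using hneg.2 j) (hβ.2 j)

lemma isPos_sref {i : Fin n} {β : V} (hβ : D.IsPos β) (hne : β ≠ D.α i) :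
    D.IsPos (D.sref i β) := by
  obtain ⟨j, hji, hj⟩ : ∃ j ≠ i, 0 < D.coord j β := by
    by_contra! h
    have hβ_eq : β = D.coord i β • D.α i := by
      conv_lhs => rw [← D.sum_coord_smul_alpha β]
      refine Finset.sum_eq_single i (fun j _ hji => ?_) (by simp)
      rw [le_antisymm (h j hji) (hβ.2 j), zero_smul]
    rcases D.reduced _ (D.simple_mem i) _ (hβ_eq ▸ hβ.1) with h1 | h1
    · exact hne (by rw [hβ_eq, h1, one_smul])
    · linarith [hβ.2 i]
  refine (D.isPos_or_forall_coord_nonpos (D.sref_mem_R i hβ.1)).resolve_right fun h => ?_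
  have := h j
  rw [coord_sref_of_ne D hji.symm] at this
  linarith

end Positivity

section Exchange

lemma isPos_alpha (i : Fin n) : D.IsPos (D.α i) :=
  ⟨D.simple_mem i, fun j => by rw [coord_alpha]; split_ifs <;> norm_num⟩

lemma exists_split_of_not_isPos_word {β : V} (hβ : D.IsPos β) {m : List (Fin n)}
    (h : ¬ D.IsPos (D.word m β)) : ∃ m₁ j m₂, m = m₁ ++ j :: m₂ ∧ D.word m₂ β = D.α j := by
  induction m with
  | nil => exact absurd hβ h
  | cons j m ih =>
    by_cases hm : D.IsPos (D.word m β)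
    · refine ⟨[], j, m, rfl, by_contra fun hne => h ?_⟩
      simpa using D.isPos_sref hm hne
    · obtain ⟨m₁, k, m₂, rfl, hk⟩ := ih hm
      exact ⟨j :: m₁, k, m₂, rfl, hk⟩

lemma mul_sref_eq_sref_mul {g : V ≃ₗ[ℝ] V} (hg : ∀ x y, ⟪g x, g y⟫_ℝ = ⟪x, y⟫_ℝ) {i j : Fin n}
    (h : g (D.α i) = D.α j) : g * D.sref i = D.sref j * g := by
  ext x
  have : ⟪g x, D.coroot j⟫_ℝ = ⟪x, D.coroot i⟫_ℝ := by
    rw [inner_coroot, inner_coroot, ← h, hg, hg]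
  simp [sref_apply, h, this]

/-- The exchange condition. -/
lemma exists_shorter_word_eq_mul_sref {m : List (Fin n)} {i : Fin n}
    (h : ¬ D.IsPos (D.word m (D.α i))) :
    ∃ m', m'.length < m.length ∧ D.word m' = D.word m * D.sref i := by
  obtain ⟨m₁, j, m₂, rfl, hj⟩ := D.exists_split_of_not_isPos_word (D.isPos_alpha i) h
  have hcomm := D.mul_sref_eq_sref_mul (D.inner_map_map_of_mem_WK (D.word_mem_W m₂)) hj
  refine ⟨m₁ ++ m₂, by simp, ?_⟩
  rw [word_append, word_append, word_cons, mul_assoc, mul_assoc, hcomm, ← mul_assoc (D.sref j),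
    sref_mul_self, one_mul]

lemma eq_one_of_forall_isPos {g : V ≃ₗ[ℝ] V} (hg : g ∈ D.W) (h : ∀ i, D.IsPos (g (D.α i))) :
    g = 1 := by
  obtain ⟨l, rfl⟩ := D.exists_word_eq hg
  induction hl : l.length using Nat.strong_induction_on generalizing l with
  | _ k ih =>
  rcases l.eq_nil_or_concat' with rfl | ⟨m, i, rfl⟩
  · rfl
  have hm : ¬ D.IsPos (D.word m (D.α i)) := fun hpos => D.not_isPos_neg hpos <| by
    simpa [sref_alpha_self] using h i
  obtain ⟨m', hlen, hm'⟩ := D.exists_shorter_word_eq_mul_sref hm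
  have hw : D.word (m ++ [i]) = D.word m' := by simp [hm']
  rw [hw] at h ⊢
  exact ih _ (by simp at hl; omega) m' (D.word_mem_W m') h rfl

end Exchange

section Chamber

variable {D} {a : V}

lemma inner_pos_of_coord_nonneg (ha : a ∈ D.C) {β : V} (hβ : β ≠ 0)
    (h : ∀ j, 0 ≤ D.coord j β) : 0 < ⟪a, β⟫_ℝ := by
  obtain ⟨k, hk⟩ : ∃ k, D.coord k β ≠ 0 := by
    by_contra! h0
    exact hβ (D.eq_zero_of_forall_coord_eq_zero h0)
  rw [← D.sum_coord_smul_alpha β, inner_sum]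
  refine Finset.sum_pos' (fun j _ => ?_) ⟨k, Finset.mem_univ k, ?_⟩
  · rw [real_inner_smul_right]
    exact mul_nonneg (h j) (ha j).le
  · rw [real_inner_smul_right]
    exact mul_pos ((h k).lt_of_ne' hk) (ha k)

lemma isPos_of_inner_nonneg (ha : a ∈ D.C) {β : V} (hβ : β ∈ D.R) (h : 0 ≤ ⟪a, β⟫_ℝ) :
    D.IsPos β := by
  refine (D.isPos_or_forall_coord_nonpos hβ).resolve_right fun hneg => ?_
  have := inner_pos_of_coord_nonneg ha (neg_ne_zero.2 (D.root_ne_zero β hβ))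
    (fun j => by simpa using hneg j)
  rw [inner_neg_right] at this
  linarith

lemma apply_eq_self_of_mem_closedC (ha : a ∈ D.C) {g : V ≃ₗ[ℝ] V} (hg : g ∈ D.W)
    (hga : g a ∈ D.closedC) : g a = a := by
  have hinv : g⁻¹ = 1 := D.eq_one_of_forall_isPos (inv_mem hg) fun i =>
    isPos_of_inner_nonneg ha (D.map_mem_R_of_mem_WK (inv_mem hg) (D.simple_mem i)) <| by
      rw [← D.inner_map_map_of_mem_WK hg, show g (g⁻¹ (D.α i)) = D.α i from g.apply_symm_apply _]
      exact hga i
  rw [inv_eq_one.1 hinv]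
  rfl

end Chamber

section Orbit

lemma W_finite : (D.W : Set (V ≃ₗ[ℝ] V)).Finite := by
  have : Finite D.R := D.finite
  refine Set.finite_coe_iff.1 <| Finite.of_injective
    (fun g : D.W => fun β : D.R => (⟨g.1 β, D.map_mem_R_of_mem_WK g.2 β.2⟩ : D.R)) ?_
  have hspan : Submodule.span ℝ D.R = ⊤ :=
    top_unique (D.spanning ▸ Submodule.span_mono (Set.range_subset_iff.2 D.simple_mem))
  intro g g' h
  refine Subtype.ext <| LinearEquiv.toLinearMap_injective <| LinearMap.ext_on hspan fun β hβ => ?_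
  exact congrArg Subtype.val (congrFun h ⟨β, hβ⟩)

lemma orbit_finite (a : V) : (D.orbit Set.univ a).Finite :=
  (D.W_finite.image fun g => g a).subset fun _ ⟨g, hg, hx⟩ => ⟨g, hg, hx⟩

lemma self_mem_orbit (K : Set (Fin n)) (a : V) : a ∈ D.orbit K a := ⟨1, one_mem _, rfl⟩

lemma orbit_mono {K K' : Set (Fin n)} (h : K ⊆ K') (a : V) : D.orbit K a ⊆ D.orbit K' a :=
  fun _ ⟨g, hg, hx⟩ => ⟨g, D.WK_mono h hg, hx⟩

lemma sref_mem_orbit {K : Set (Fin n)} {j : Fin n} (hj : j ∈ K) {a x : V}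
    (hx : x ∈ D.orbit K a) : D.sref j x ∈ D.orbit K a := by
  obtain ⟨g, hg, rfl⟩ := hx
  exact ⟨D.sref j * g, mul_mem (D.sref_mem_WK hj) hg, rfl⟩

lemma image_orbit {g : V ≃ₗ[ℝ] V} (hg : g ∈ D.W) (a : V) :
    g '' D.orbit Set.univ a = D.orbit Set.univ a := by
  ext x
  constructor
  · rintro ⟨_, ⟨w, hw, rfl⟩, rfl⟩
    exact ⟨g * w, mul_mem hg hw, rfl⟩
  · rintro ⟨w, hw, rfl⟩
    exact ⟨(g⁻¹ * w) a, ⟨_, mul_mem (inv_mem hg) hw, rfl⟩, g.apply_symm_apply (w a)⟩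

lemma image_P {g : V ≃ₗ[ℝ] V} (hg : g ∈ D.W) (a : V) : g '' D.P a = D.P a := by
  change g.toLinearMap '' convexHull ℝ _ = _
  rw [LinearMap.image_convexHull]
  exact congrArg _ (D.image_orbit hg a)

lemma coord_eq_of_mem_orbit_compl (i : Fin n) {a x : V} (hx : x ∈ D.orbit {i}ᶜ a) :
    D.coord i x = D.coord i a := by
  obtain ⟨g, hg, rfl⟩ := hx
  exact D.WK_induction (p := fun g => D.coord i (g a) = D.coord i a) rfl
    (fun j hj g ih => (D.coord_sref_of_ne hj (g a)).trans ih) hg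

variable {D} {a : V}

lemma eq_of_mem_orbit_of_mem_closedC (ha : a ∈ D.C) {x : V} (hx : x ∈ D.orbit Set.univ a)
    (hxC : x ∈ D.closedC) : x = a := by
  obtain ⟨g, hg, rfl⟩ := hx
  exact D.apply_eq_self_of_mem_closedC ha hg hxC

lemma inner_lt_inner_sref (ha : a ∈ D.C) {x : V} {j : Fin n} (hx : ⟪x, D.α j⟫_ℝ < 0) :
    ⟪x, a⟫_ℝ < ⟪D.sref j x, a⟫_ℝ := by
  rw [sref_apply, inner_sub_left, real_inner_smul_left, real_inner_comm a (D.α j)]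
  nlinarith [ha j, D.inner_coroot_neg hx]

/-- Each `step` strictly increases `⟪·, a⟫`, so the climb ends: the orbit is finite and meets the
closed chamber only at `a`. -/
theorem orbit_induction (ha : a ∈ D.C) {p : V → Prop} (base : p a)
    (step : ∀ x ∈ D.orbit Set.univ a, ∀ j, ⟪x, D.α j⟫_ℝ < 0 → p (D.sref j x) → p x)
    {x : V} (hx : x ∈ D.orbit Set.univ a) : p x := by
  induction hm : {y ∈ D.orbit Set.univ a | ⟪x, a⟫_ℝ < ⟪y, a⟫_ℝ}.ncard
    using Nat.strong_induction_on generalizing x with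
  | _ m ih =>
  by_cases hxC : x ∈ D.closedC
  · rwa [eq_of_mem_orbit_of_mem_closedC ha hx hxC]
  obtain ⟨j, hj⟩ : ∃ j, ⟪x, D.α j⟫_ℝ < 0 := by simpa [closedC] using hxC
  have hlt := inner_lt_inner_sref ha hj
  have hsx := D.sref_mem_orbit (Set.mem_univ j) hx
  refine step x hx j hj (ih _ ?_ hsx rfl)
  rw [← hm]
  refine Set.ncard_lt_ncard ⟨fun y hy => ⟨hy.1, hlt.trans hy.2⟩, fun h => ?_⟩
    ((D.orbit_finite a).subset fun y hy => hy.1)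
  exact lt_irrefl _ (h ⟨hsx, hlt⟩).2

lemma coord_le_of_mem_orbit (ha : a ∈ D.C) (i : Fin n) {x : V} (hx : x ∈ D.orbit Set.univ a) :
    D.coord i x ≤ D.coord i a := by
  refine orbit_induction ha (p := fun x => D.coord i x ≤ D.coord i a) le_rfl
    (fun x _ j hj h => le_trans ?_ h) hx
  rw [coord_sref]
  split_ifs <;> linarith [D.inner_coroot_neg hj]

lemma mem_orbit_compl_of_coord_eq (ha : a ∈ D.C) (i : Fin n) {x : V}
    (hx : x ∈ D.orbit Set.univ a) (hxi : D.coord i x = D.coord i a) : x ∈ D.orbit {i}ᶜ a := by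
  refine orbit_induction ha (p := fun x => D.coord i x = D.coord i a → x ∈ D.orbit {i}ᶜ a)
    (fun _ => D.self_mem_orbit _ a) (fun x hx j hj ih hxi => ?_) hx hxi
  have hji : j ≠ i := by
    rintro rfl
    have := coord_le_of_mem_orbit ha j (D.sref_mem_orbit (Set.mem_univ j) hx)
    rw [coord_sref_self] at this
    linarith [D.inner_coroot_neg hj]
  have := D.sref_mem_orbit (show j ∈ ({i}ᶜ : Set (Fin n)) from hji)
    (ih (by rw [coord_sref_of_ne D hji, hxi]))
  rwa [sref_sref] at this

end Orbit

section Polytope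

variable {D} {a : V}

lemma P_subset_halfspace (ha : a ∈ D.C) (i : Fin n) :
    D.P a ⊆ {x | D.coord i x ≤ D.coord i a} :=
  convexHull_min (fun _ hx => coord_le_of_mem_orbit ha i hx)
    (convex_halfSpace_le (D.coord i).isLinear _)

lemma F_subset_hyperplane (i : Fin n) : D.F a i ⊆ {x | D.coord i x = D.coord i a} :=
  convexHull_min (fun _ hx => D.coord_eq_of_mem_orbit_compl i hx)
    (convex_hyperplane (D.coord i).isLinear _)

lemma F_subset_P (i : Fin n) : D.F a i ⊆ D.P a :=
  convexHull_mono (D.orbit_mono (Set.subset_univ _) a)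

lemma a_mem_F (i : Fin n) : a ∈ D.F a i := subset_convexHull ℝ _ (D.self_mem_orbit _ a)

lemma sref_mem_F {i j : Fin n} (hji : j ≠ i) : D.sref j a ∈ D.F a i :=
  subset_convexHull ℝ _ (D.sref_mem_orbit hji (D.self_mem_orbit _ a))

lemma sref_mem_P (j : Fin n) : D.sref j a ∈ D.P a :=
  subset_convexHull ℝ _ (D.sref_mem_orbit (Set.mem_univ j) (D.self_mem_orbit _ a))

lemma F_eq_P_inter_hyperplane (ha : a ∈ D.C) (i : Fin n) :
    D.F a i = D.P a ∩ {x | D.coord i x = D.coord i a} := by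
  refine (Set.subset_inter (F_subset_P i) (F_subset_hyperplane i)).antisymm ?_
  refine (convexHull_inter_subset_of_le (D.coord i) fun x hx => coord_le_of_mem_orbit ha i hx).trans
    (convexHull_mono fun x ⟨hx, hxi⟩ => mem_orbit_compl_of_coord_eq ha i hx hxi)

lemma isFaceOf_F (ha : a ∈ D.C) (i : Fin n) : IsFaceOf (D.P a) (D.F a i) := by
  refine ⟨convex_convexHull ℝ _, ?_, a, a_mem_F i⟩
  rw [F_eq_P_inter_hyperplane ha]
  exact isExtreme_inter_of_le (D.coord i) fun x hx => P_subset_halfspace ha i hx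

lemma coord_sref_self_lt (ha : a ∈ D.C) (i : Fin n) : D.coord i (D.sref i a) < D.coord i a := by
  rw [coord_sref_self]
  linarith [D.inner_coroot_pos (ha i)]

lemma sref_not_mem_F (ha : a ∈ D.C) (i : Fin n) : D.sref i a ∉ D.F a i := fun h =>
  (coord_sref_self_lt ha i).ne (F_subset_hyperplane i h)

lemma F_ne_P (ha : a ∈ D.C) (i : Fin n) : D.F a i ≠ D.P a := fun h =>
  sref_not_mem_F ha i (h ▸ sref_mem_P i)

lemma F_injective (ha : a ∈ D.C) : Function.Injective (D.F a) := fun i _ h =>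
  by_contra fun hij => sref_not_mem_F ha i (h ▸ sref_mem_F hij)

/-- Since `s_j a - a = -⟪a, α_j∨⟫ α_j`, the points `a, s_1 a, …, s_n a` span a simplex in `P a`
whose barycentric coordinates are read off from the coordinates of `y - a`. -/
lemma mem_P_of_coord_sub_nonpos (ha : a ∈ D.C) {y : V} (h₀ : ∀ j, D.coord j (y - a) ≤ 0)
    (h₁ : ∑ j, -D.coord j (y - a) / ⟪a, D.coroot j⟫_ℝ ≤ 1) : y ∈ D.P a := by
  have hy : y = a + ∑ j, (-D.coord j (y - a) / ⟪a, D.coroot j⟫_ℝ) • (D.sref j a - a) := by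
    conv_lhs => rw [← add_sub_cancel a y, ← D.sum_coord_smul_alpha (y - a)]
    congr 1
    refine Finset.sum_congr rfl fun j _ => ?_
    rw [sref_apply, sub_sub_cancel_left, smul_neg, smul_smul,
      div_mul_cancel₀ _ (D.inner_coroot_pos (ha j)).ne', neg_smul, neg_neg]
  rw [hy]
  exact (convex_convexHull ℝ _).add_sum_smul_sub_mem (subset_convexHull ℝ _ (D.self_mem_orbit _ a))
    _ (fun j _ => div_nonneg (neg_nonneg.2 (h₀ j)) (D.inner_coroot_pos (ha j)).le) h₁
    fun j _ => sref_mem_P j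

lemma mem_interior_P (ha : a ∈ D.C) {y : V} (h₀ : ∀ j, D.coord j (y - a) < 0)
    (h₁ : ∑ j, -D.coord j (y - a) / ⟪a, D.coroot j⟫_ℝ < 1) : y ∈ interior (D.P a) := by
  have := D.basis.finiteDimensional_of_finite
  have hcont (j : Fin n) : Continuous fun y => D.coord j (y - a) :=
    (D.coord j).continuous_of_finiteDimensional.comp (continuous_sub_right a)
  have hopen : IsOpen ((⋂ j, {y | D.coord j (y - a) < 0}) ∩
      {y | ∑ j, -D.coord j (y - a) / ⟪a, D.coroot j⟫_ℝ < 1}) :=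
    (isOpen_iInter_of_finite fun j => isOpen_lt (hcont j) continuous_const).inter
      (isOpen_lt (continuous_finsetSum _ fun j _ => (hcont j).neg.div_const _) continuous_const)
  refine interior_maximal (fun y hy => ?_) hopen ⟨Set.mem_iInter.2 h₀, h₁⟩
  exact mem_P_of_coord_sub_nonpos ha (fun j => (Set.mem_iInter.1 hy.1 j).le) hy.2.le

lemma exists_mem_interior_P (ha : a ∈ D.C) {G : Set V} (hG : Convex ℝ G) (hGP : G ⊆ D.P a)
    (haG : a ∈ G) (hy : ∀ k, ∃ y ∈ G, D.coord k y < D.coord k a) :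
    ∃ q ∈ G, q ∈ interior (D.P a) := by
  choose y hyG hy using hy
  set d : Fin n → ℝ := fun j => ∑ k, D.coord j (y k - a)
  have hd (j : Fin n) : d j < 0 := by
    refine Finset.sum_neg' (fun k _ => ?_) ⟨j, Finset.mem_univ j, ?_⟩
    · rw [map_sub, sub_nonpos]
      exact P_subset_halfspace ha j (hGP (hyG k))
    · rw [map_sub, sub_neg]
      exact hy j
  set S := ∑ j, -d j / ⟪a, D.coroot j⟫_ℝ
  have hS : 0 ≤ S := Finset.sum_nonneg fun j _ =>
    div_nonneg (neg_nonneg.2 (hd j).le) (D.inner_coroot_pos (ha j)).le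
  set θ := 1 / (S + n + 1)
  have hθ : 0 < θ := by positivity
  have hcoord (j : Fin n) : D.coord j (a + ∑ k, θ • (y k - a) - a) = θ * d j := by
    rw [add_sub_cancel_left, map_sum, Finset.mul_sum]
    simp only [map_smul, smul_eq_mul]
  refine ⟨a + ∑ k, θ • (y k - a), hG.add_sum_smul_sub_mem haG _ (fun _ _ => hθ.le) ?_
    fun k _ => hyG k, mem_interior_P ha (fun j => ?_) ?_⟩
  · rw [Finset.sum_const, Finset.card_univ, Fintype.card_fin, nsmul_eq_mul, mul_one_div,
      div_le_one (by positivity)]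
    linarith
  · rw [hcoord]
    exact mul_neg_of_pos_of_neg hθ (hd j)
  · have hsum : ∑ j, -D.coord j (a + ∑ k, θ • (y k - a) - a) / ⟪a, D.coroot j⟫_ℝ = θ * S := by
      rw [Finset.mul_sum]
      exact Finset.sum_congr rfl fun j _ => by rw [hcoord]; ring
    rw [hsum, one_div_mul_eq_div, div_lt_one (by positivity)]
    linarith

lemma eq_P_of_isFaceOf (ha : a ∈ D.C) {G : Set V} (hG : IsFaceOf (D.P a) G) (haG : a ∈ G)
    (hy : ∀ k, ∃ y ∈ G, D.coord k y < D.coord k a) : G = D.P a := by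
  obtain ⟨q, hqG, hq⟩ := exists_mem_interior_P ha hG.1 hG.2.1.subset haG hy
  exact hG.2.1.eq_of_mem_interior hqG hq

lemma isFacetOf_F (ha : a ∈ D.C) (i : Fin n) : IsFacetOf (D.P a) (D.F a i) := by
  refine ⟨isFaceOf_F ha i, F_ne_P ha i, fun G hG hFG => ?_⟩
  by_cases hGi : ∃ y ∈ G, D.coord i y ≠ D.coord i a
  swap
  · refine .inl (Set.Subset.antisymm ?_ hFG)
    rw [F_eq_P_inter_hyperplane ha]
    exact fun x hx => ⟨hG.2.1.subset hx, by_contra fun h => hGi ⟨x, hx, h⟩⟩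
  obtain ⟨y, hyG, hy⟩ := hGi
  refine .inr (eq_P_of_isFaceOf ha hG (hFG (a_mem_F i)) fun k => ?_)
  by_cases hk : k = i
  · subst hk
    exact ⟨y, hyG, (P_subset_halfspace ha k (hG.2.1.subset hyG)).lt_of_ne hy⟩
  · exact ⟨D.sref k a, hFG (sref_mem_F hk), coord_sref_self_lt ha k⟩

lemma eq_F_of_isFacetOf (ha : a ∈ D.C) {G : Set V} (hG : IsFacetOf (D.P a) G) (haG : a ∈ G) :
    ∃ i, G = D.F a i := by
  by_contra! hne
  refine hG.2.1 (eq_P_of_isFaceOf ha hG.1 haG fun k => ?_)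
  by_contra! hk
  have hGF : G ⊆ D.F a k := by
    rw [F_eq_P_inter_hyperplane ha]
    exact fun x hx => ⟨hG.1.2.1.subset hx,
      le_antisymm (P_subset_halfspace ha k (hG.1.2.1.subset hx)) (hk x hx)⟩
  rcases hG.2.2 _ (isFaceOf_F ha k) hGF with h | h
  · exact hne k h.symm
  · exact F_ne_P ha k h

lemma ncard_facets_mem (ha : a ∈ D.C) {v : V} (hv : v ∈ (D.P a).extremePoints ℝ) :
    {G | IsFacetOf (D.P a) G ∧ v ∈ G}.ncard = n := by
  obtain ⟨g, hg, rfl⟩ := extremePoints_convexHull_subset hv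
  rw [ncard_facets_mem_image g (D.image_P hg a)]
  have : {G | IsFacetOf (D.P a) G ∧ a ∈ G} = Set.range (D.F a) := by
    ext G
    constructor
    · rintro ⟨hG, haG⟩
      obtain ⟨i, rfl⟩ := eq_F_of_isFacetOf ha hG haG
      exact ⟨i, rfl⟩
    · rintro ⟨i, rfl⟩
      exact ⟨isFacetOf_F ha i, a_mem_F i⟩
  rw [this, ← Set.image_univ, Set.ncard_image_of_injective _ (F_injective ha), Set.ncard_univ,
    Nat.card_eq_fintype_card, Fintype.card_fin]

end Polytope

lemma coord_eq_inner {ω : Fin n → V}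
    (hω : ∀ i j, ⟪ω i, D.α j⟫_ℝ = if i = j then 1 else 0) (i : Fin n) (x : V) :
    D.coord i x = ⟪x, ω i⟫_ℝ := by
  have : D.coord i = innerₛₗ ℝ (ω i) := D.basis.ext fun j => by
    rw [basis_apply, coord_alpha, innerₛₗ_apply_apply, hω]
    exact if_congr eq_comm rfl rfl
  rw [this, innerₛₗ_apply_apply, real_inner_comm]

end RootSystemData

/-- The vertex `a` of the Weyl polytope `P = Conv(W(a))` lies on exactly the `n` facets
`F_i = Conv(W_{[n]∖{i}}(a))`, each supported by the affine hyperplane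
`{x : ⟨x − a, ω_i∨⟩ = 0}` with inward normal `−ω_i∨`; hence `P` is a simple polytope. -/
theorem stmt_15 {V : Type} [NormedAddCommGroup V] [InnerProductSpace ℝ V] {n : ℕ}
    (D : RootSystemData V n) (ω : Fin n → V)
    (hω : ∀ i j, ⟪ω i, D.α j⟫_ℝ = if i = j then 1 else 0)
    (a : V) (ha : a ∈ D.C) :
    (∀ i, D.F a i ⊆ {x | ⟪x - a, ω i⟫_ℝ = 0} ∧ D.P a ⊆ {x | ⟪x - a, ω i⟫_ℝ ≤ 0}) ∧
    (∀ i, IsFacetOf (D.P a) (D.F a i)) ∧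
    Function.Injective (D.F a) ∧
    (∀ G : Set V, IsFacetOf (D.P a) G → a ∈ G → ∃ i, G = D.F a i) ∧
    (∀ v ∈ Set.extremePoints ℝ (D.P a), {G : Set V | IsFacetOf (D.P a) G ∧ v ∈ G}.ncard = n) := by
  open RootSystemData in
  have hcoord (i : Fin n) (x : V) : ⟪x - a, ω i⟫_ℝ = D.coord i x - D.coord i a := by
    rw [← map_sub, coord_eq_inner D hω]
  refine ⟨fun i => ⟨fun x hx => ?_, fun x hx => ?_⟩, isFacetOf_F ha, F_injective ha,
    fun _ => eq_F_of_isFacetOf ha, fun _ => ncard_facets_mem ha⟩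
  · change ⟪x - a, ω i⟫_ℝ = 0
    rw [hcoord, sub_eq_zero]
    exact F_subset_hyperplane i hx
  · change ⟪x - a, ω i⟫_ℝ ≤ 0
    rw [hcoord, sub_nonpos]
    exact P_subset_halfspace ha i hx
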